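/- arXiv:1811.09165 — 2 statements merged into one kernel-verified Lean document; each statement's English description precedes it below -/
import Mathlib

section
/- Let M = ⊕_{i=1}^{a} k_{S_i} and N = ⊕_{j=1}^{b} k_{T_j} be finite direct sums of staircase modules over ℝ², and let ε ≥ 0. Let M° = ⊕_{i=1}^{a} k_{S_i°} and N° = ⊕_{j=1}^{b} k_{T_j°}, where S° denotes the topological interior of S in ℝ². Then there exists an injective morphism f : M → N with ε-trivial cokernel if and only if there exists an injective morphism f° : M° → N° with ε-trivial cokernel. -/
structure PersMod (F : Type) [Field F] where
  space : ℝ × ℝ → Type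
  [isACG : ∀ p, AddCommGroup (space p)]
  [isMod : ∀ p, Module F (space p)]
  map : ∀ {p q : ℝ × ℝ}, p ≤ q → (space p →ₗ[F] space q)
  map_id : ∀ p : ℝ × ℝ, map (le_refl p) = LinearMap.id
  map_comp : ∀ {p q r : ℝ × ℝ} (hpq : p ≤ q) (hqr : q ≤ r),
      map hqr ∘ₗ map hpq = map (le_trans hpq hqr)

attribute [instance] PersMod.isACG PersMod.isMod

variable {F : Type} [Field F]

/-- `f` is a morphism of persistence modules `M → N`. -/
def IsHom (M N : PersMod F) (f : ∀ p, M.space p →ₗ[F] N.space p) : Prop :=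
  ∀ ⦃p q : ℝ × ℝ⦄ (h : p ≤ q), N.map h ∘ₗ f p = f q ∘ₗ M.map h

/-- `f` is a morphism of persistence modules `M → N^ε` (the `ε`-shift of `N`). -/
def IsHomShift (M N : PersMod F) (ε : ℝ)
    (f : ∀ p : ℝ × ℝ, M.space p →ₗ[F] N.space (p + (ε, ε))) : Prop :=
  ∀ ⦃p q : ℝ × ℝ⦄ (h : p ≤ q),
    N.map (add_le_add h (le_refl ((ε : ℝ), (ε : ℝ)))) ∘ₗ f p = f q ∘ₗ M.map h

/-- `(f, g)` is an `ε`-interleaving between `M` and `N`. -/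
def IsInterleaving (M N : PersMod F) (ε : ℝ)
    (f : ∀ p : ℝ × ℝ, M.space p →ₗ[F] N.space (p + (ε, ε)))
    (g : ∀ p : ℝ × ℝ, N.space p →ₗ[F] M.space (p + (ε, ε))) : Prop :=
  IsHomShift M N ε f ∧ IsHomShift N M ε g ∧
  (∀ (p : ℝ × ℝ) (h : p ≤ p + (ε, ε) + (ε, ε)), g (p + (ε, ε)) ∘ₗ f p = M.map h) ∧
  (∀ (p : ℝ × ℝ) (h : p ≤ p + (ε, ε) + (ε, ε)), f (p + (ε, ε)) ∘ₗ g p = N.map h)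

def upset (a : ℝ × ℝ) : Set (ℝ × ℝ) := {x | a ≤ x}

def IsStaircase (S : Set (ℝ × ℝ)) : Prop :=
  ∃ A : Finset (ℝ × ℝ), A.Nonempty ∧ S = ⋃ a ∈ A, upset a

def UpClosed (U : Set (ℝ × ℝ)) : Prop :=
  ∀ ⦃p q : ℝ × ℝ⦄, p ≤ q → p ∈ U → q ∈ U

theorem IsStaircase.upClosed {S : Set (ℝ × ℝ)} (hS : IsStaircase S) : UpClosed S := by
  obtain ⟨A, -, rfl⟩ := hS
  intro p q hpq hp
  simp only [Set.mem_iUnion] at hp ⊢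
  obtain ⟨a, ha, hpa⟩ := hp
  exact ⟨a, ha, le_trans hpa hpq⟩

open Classical in
/-- The fiber of the staircase module over `U` at `p` : `F` if `p ∈ U`, else `0`,
realized as a submodule of `F`. -/
noncomputable def lineAt (F : Type) [Field F] (U : Set (ℝ × ℝ)) (p : ℝ × ℝ) :
    Submodule F F :=
  if p ∈ U then ⊤ else ⊥

/-- The interval (staircase) module `k_U` of an upward closed set `U`. -/
noncomputable def stairMod (F : Type) [Field F] (U : Set (ℝ × ℝ)) (hU : UpClosed U) :
    PersMod F where
  space p := ↥(lineAt F U p)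
  map {p q} h := Submodule.inclusion (by
    by_cases hp : p ∈ U
    · simp [lineAt, hp, hU h hp]
    · simp [lineAt, hp])
  map_id p := rfl
  map_comp _ _ := rfl

/-- The element `1 ∈ F = (k_U)_p` for `p ∈ U`. -/
noncomputable def unitVec (F : Type) [Field F] (U : Set (ℝ × ℝ)) (p : ℝ × ℝ)
    (hp : p ∈ U) : ↥(lineAt F U p) :=
  ⟨1, by simp [lineAt, hp]⟩

/-- The value in `F` of an element of the fiber of `k_U` at `p`. -/
noncomputable def valAt (F : Type) [Field F] (U : Set (ℝ × ℝ)) (p : ℝ × ℝ) :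
    ↥(lineAt F U p) →ₗ[F] F :=
  (lineAt F U p).subtype

/-- Finite direct sums of persistence modules, defined pointwise. -/
noncomputable def dirSum {n : ℕ} (Ms : Fin n → PersMod F) : PersMod F where
  space p := ∀ i, (Ms i).space p
  map h := LinearMap.pi fun i => (Ms i).map h ∘ₗ LinearMap.proj i
  map_id p := by
    refine LinearMap.ext fun x => funext fun i => ?_
    simp [(Ms i).map_id]
  map_comp hpq hqr := by
    refine LinearMap.ext fun x => funext fun i => ?_
    simpa using LinearMap.congr_fun ((Ms i).map_comp hpq hqr) (x i)

/-- Direct sum of staircase modules. -/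
noncomputable def stairSum (F : Type) [Field F] {n : ℕ} (S : Fin n → Set (ℝ × ℝ))
    (hS : ∀ i, UpClosed (S i)) : PersMod F :=
  dirSum fun i => stairMod F (S i) (hS i)

/-- The `ε`-shift `S^ε = {x - (ε,ε) : x ∈ S}` of a set. -/
def shiftSet (S : Set (ℝ × ℝ)) (ε : ℝ) : Set (ℝ × ℝ) := {x | x + (ε, ε) ∈ S}

/-- The directed shift distance `d_s(S,T) = min {ε ≥ 0 : S ⊆ T^ε}`. -/
noncomputable def dirDist (S T : Set (ℝ × ℝ)) : ℝ :=
  sInf {ε : ℝ | 0 ≤ ε ∧ S ⊆ shiftSet T ε}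

/-- `M`, `N` are `ε`-interleaved. -/
def Interleaved (M N : PersMod F) (ε : ℝ) : Prop :=
  ∃ f g, IsInterleaving M N ε f g

/-- The interleaving distance. -/
noncomputable def interDist (M N : PersMod F) : ℝ :=
  sInf {ε : ℝ | 0 ≤ ε ∧ Interleaved M N ε}

/-- `S` has a finite generating set all of whose members are `≤ u`. -/
theorem upClosed_of_gens {S : Set (ℝ × ℝ)} {u : ℝ × ℝ}
    (h : ∃ A : Finset (ℝ × ℝ), A.Nonempty ∧ S = (⋃ a ∈ A, upset a) ∧ ∀ a ∈ A, a ≤ u) :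
    UpClosed S := by
  obtain ⟨A, hne, hSeq, -⟩ := h
  exact IsStaircase.upClosed ⟨A, hne, hSeq⟩

theorem mem_of_gens {S : Set (ℝ × ℝ)} {u v : ℝ × ℝ}
    (h : ∃ A : Finset (ℝ × ℝ), A.Nonempty ∧ S = (⋃ a ∈ A, upset a) ∧ ∀ a ∈ A, a ≤ u)
    (huv : u ≤ v) : v ∈ S := by
  obtain ⟨A, ⟨a, ha⟩, rfl, hle⟩ := h
  exact Set.mem_biUnion ha (le_trans (hle a ha) huv)

/-- `f : M → N^ε` has `δ`-trivial kernel: the induced map `ker f_p → ker f_{p+(δ,δ)}`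
is zero for all `p`. -/
def TrivialKerS (M N : PersMod F) (ε δ : ℝ)
    (f : ∀ p, M.space p →ₗ[F] N.space (p + (ε, ε))) : Prop :=
  ∀ (p : ℝ × ℝ) (x : M.space p), f p x = 0 → ∀ h : p ≤ p + (δ, δ), M.map h x = 0

/-- `f : M → N^ε` has `δ`-trivial cokernel: the induced map
`coker f_p → coker f_{p+(δ,δ)}` is zero for all `p`. -/
def TrivialCokerS (M N : PersMod F) (ε δ : ℝ)
    (f : ∀ p, M.space p →ₗ[F] N.space (p + (ε, ε))) : Prop :=
  ∀ (p : ℝ × ℝ) (y : N.space (p + (ε, ε))) (h : p + (ε, ε) ≤ p + (δ, δ) + (ε, ε)),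
    ∃ x : M.space (p + (δ, δ)), f (p + (δ, δ)) x = N.map h y

/-- `f : M → N` has `δ`-trivial kernel. -/
def TrivialKer (M N : PersMod F) (δ : ℝ) (f : ∀ p, M.space p →ₗ[F] N.space p) : Prop :=
  ∀ (p : ℝ × ℝ) (x : M.space p), f p x = 0 → ∀ h : p ≤ p + (δ, δ), M.map h x = 0

/-- `f : M → N` has `δ`-trivial cokernel. -/
def TrivialCoker (M N : PersMod F) (δ : ℝ) (f : ∀ p, M.space p →ₗ[F] N.space p) : Prop :=
  ∀ (p : ℝ × ℝ) (y : N.space p) (h : p ≤ p + (δ, δ)),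
    ∃ x : M.space (p + (δ, δ)), f (p + (δ, δ)) x = N.map h y

/-- The interior of an upward closed subset of `ℝ²` is upward closed. -/
theorem upClosed_interior {U : Set (ℝ × ℝ)} (hU : UpClosed U) :
    UpClosed (interior U) := by
  intro p q hpq hp
  have hsub : (fun x : ℝ × ℝ => x - (q - p)) ⁻¹' interior U ⊆ U := fun x hx =>
    hU (sub_le_self x (sub_nonneg.mpr hpq)) (interior_subset hx)
  have hopen : IsOpen ((fun x : ℝ × ℝ => x - (q - p)) ⁻¹' interior U) :=
    isOpen_interior.preimage (continuous_id.sub continuous_const)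
  have hq : q ∈ (fun x : ℝ × ℝ => x - (q - p)) ⁻¹' interior U := by
    show q - (q - p) ∈ interior U
    rwa [sub_sub_cancel]
  exact interior_maximal hsub hopen hq

/-- The dual persistence module: `(M*)_p = (M_{-p})^∨`. -/
noncomputable def dualMod (M : PersMod F) : PersMod F where
  space p := Module.Dual F (M.space (-p))
  map {p q} h := (M.map (neg_le_neg h)).dualMap
  map_id p := by
    have h : M.map (neg_le_neg (le_refl p)) = LinearMap.id := M.map_id (-p)
    ext φ x
    simp [h]
  map_comp hpq hqr := by
    ext φ x
    have h := LinearMap.congr_fun (M.map_comp (neg_le_neg hqr) (neg_le_neg hpq)) x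
    simp only [LinearMap.comp_apply, LinearMap.dualMap_apply] at h ⊢
    rw [h]

/-!
A morphism `⊕ᵢ k_{Sᵢ} → ⊕ⱼ k_{Tⱼ}` is given by a single matrix `C` over `F`: by naturality its
coefficient `C j i` is constant along the upset `Sᵢ`, and it vanishes at points of `Sᵢ \ Tⱼ`.
Injectivity at `p` and `ε`-triviality of the cokernel at `p` then become linear-algebra conditions
on `C` that only see which `Sᵢ` contain `p` and `p + (ε, ε)` and which `Tⱼ` contain `p`. For
upsets these membership patterns at `p` for the interiors agree with those of the sets themselves
at `p - (δ, δ)` for small `δ > 0`; conversely, since staircases are closed, the patterns of the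
staircases at `p` agree with those of their interiors at `p + (δ, δ)`. So the same matrices work on
both sides.
-/

open Filter Topology Function

section Geometry

variable {U : Set (ℝ × ℝ)}

theorem IsStaircase.isClosed {S : Set (ℝ × ℝ)} (hS : IsStaircase S) : IsClosed S := by
  obtain ⟨A, -, rfl⟩ := hS
  exact isClosed_biUnion_finset fun a _ => isClosed_Ici (a := a)

theorem UpClosed.mem_interior_of_lt (hU : UpClosed U) {p q : ℝ × ℝ} (hq : q ∈ U)
    (h₁ : q.1 < p.1) (h₂ : q.2 < p.2) : p ∈ interior U :=
  mem_interior_iff_mem_nhds.2 <| mem_of_superset (prod_mem_nhds (Ioi_mem_nhds h₁)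
    (Ioi_mem_nhds h₂)) fun _ hx => hU ⟨le_of_lt hx.1, le_of_lt hx.2⟩ hq

theorem tendsto_sub_diag (p : ℝ × ℝ) :
    Tendsto (fun δ : ℝ => p - (δ, δ)) (𝓝[>] 0) (𝓝 p) := by
  have : Continuous fun δ : ℝ => p - (δ, δ) := by fun_prop
  exact (this.tendsto' 0 p (by simp [Prod.mk_zero_zero])).mono_left nhdsWithin_le_nhds

theorem tendsto_add_diag (p : ℝ × ℝ) :
    Tendsto (fun δ : ℝ => p + (δ, δ)) (𝓝[>] 0) (𝓝 p) := by
  have : Continuous fun δ : ℝ => p + (δ, δ) := by fun_prop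
  exact (this.tendsto' 0 p (by simp [Prod.mk_zero_zero])).mono_left nhdsWithin_le_nhds

theorem UpClosed.eventually_sub_mem_iff (hU : UpClosed U) (p : ℝ × ℝ) :
    ∀ᶠ δ in 𝓝[>] (0 : ℝ), p - (δ, δ) ∈ U ↔ p ∈ interior U := by
  by_cases hp : p ∈ interior U
  · filter_upwards [(tendsto_sub_diag p).eventually_mem (mem_interior_iff_mem_nhds.1 hp)]
      with δ hδ
    exact iff_of_true hδ hp
  · filter_upwards [self_mem_nhdsWithin] with δ (hδ : 0 < δ)
    refine iff_of_false (fun h => hp (hU.mem_interior_of_lt h ?_ ?_)) hp <;>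
      simpa using hδ

theorem UpClosed.eventually_add_mem_interior_iff (hU : UpClosed U) (hc : IsClosed U)
    (p : ℝ × ℝ) : ∀ᶠ δ in 𝓝[>] (0 : ℝ), p + (δ, δ) ∈ interior U ↔ p ∈ U := by
  by_cases hp : p ∈ U
  · filter_upwards [self_mem_nhdsWithin] with δ (hδ : 0 < δ)
    refine iff_of_true (hU.mem_interior_of_lt hp ?_ ?_) hp <;> simpa using hδ
  · filter_upwards [(tendsto_add_diag p).eventually_mem (hc.isOpen_compl.mem_nhds hp)]
      with δ hδ
    exact iff_of_false (fun h => hδ (interior_subset h)) hp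

end Geometry

def memPattern {ι : Type*} (U : ι → Set (ℝ × ℝ)) (p : ℝ × ℝ) : Set ι := {i | p ∈ U i}

theorem memPattern_mono {ι : Type*} {U : ι → Set (ℝ × ℝ)} (hU : ∀ i, UpClosed (U i))
    {p q : ℝ × ℝ} (h : p ≤ q) : memPattern U p ⊆ memPattern U q :=
  fun i hi => hU i h hi

section MemPattern

variable {ι κ : Type*} [Finite ι] [Finite κ]

theorem eventually_memPattern_sub {U : ι → Set (ℝ × ℝ)} (hU : ∀ i, UpClosed (U i))
    (p : ℝ × ℝ) : ∀ᶠ δ in 𝓝[>] (0 : ℝ),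
      memPattern U (p - (δ, δ)) = memPattern (fun i => interior (U i)) p :=
  (eventually_all.2 fun i => (hU i).eventually_sub_mem_iff p).mono fun _ h => Set.ext h

theorem eventually_memPattern_interior_add {U : ι → Set (ℝ × ℝ)}
    (hU : ∀ i, UpClosed (U i)) (hc : ∀ i, IsClosed (U i)) (p : ℝ × ℝ) :
    ∀ᶠ δ in 𝓝[>] (0 : ℝ), memPattern (fun i => interior (U i)) (p + (δ, δ)) = memPattern U p :=
  (eventually_all.2 fun i => (hU i).eventually_add_mem_interior_iff (hc i) p).mono
    fun _ h => Set.ext h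

theorem forall_memPattern_iff_interior {S : ι → Set (ℝ × ℝ)} {T : κ → Set (ℝ × ℝ)}
    (hSu : ∀ i, UpClosed (S i)) (hSc : ∀ i, IsClosed (S i))
    (hTu : ∀ j, UpClosed (T j)) (hTc : ∀ j, IsClosed (T j)) (e : ℝ × ℝ)
    (P : Set ι → Set κ → Set ι → Prop) :
    (∀ p, P (memPattern S p) (memPattern T p) (memPattern S (p + e))) ↔
      ∀ p, P (memPattern (fun i => interior (S i)) p) (memPattern (fun j => interior (T j)) p)
        (memPattern (fun i => interior (S i)) (p + e)) := by
  constructor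
  · intro h p
    obtain ⟨δ, hS, hT, hSe⟩ := ((eventually_memPattern_sub hSu p).and
      ((eventually_memPattern_sub hTu p).and (eventually_memPattern_sub hSu (p + e)))).exists
    have := h (p - (δ, δ))
    rwa [hS, hT, sub_add_eq_add_sub, hSe] at this
  · intro h p
    obtain ⟨δ, hS, hT, hSe⟩ := ((eventually_memPattern_interior_add hSu hSc p).and
      ((eventually_memPattern_interior_add hTu hTc p).and
        (eventually_memPattern_interior_add hSu hSc (p + e)))).exists
    have := h (p + (δ, δ))
    rwa [hS, hT, add_right_comm, hSe] at this

end MemPattern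

noncomputable section StairSum

variable {n : ℕ} {U : Fin n → Set (ℝ × ℝ)} {hU : ∀ i, UpClosed (U i)} {p q : ℝ × ℝ}

theorem mem_lineAt_iff {W : Set (ℝ × ℝ)} {c : F} : c ∈ lineAt F W p ↔ p ∈ W ∨ c = 0 := by
  by_cases hp : p ∈ W <;> simp [lineAt, hp]

def fiberVec (p : ℝ × ℝ) : (stairSum F U hU).space p →ₗ[F] Fin n → F where
  toFun x i := valAt F (U i) p (x i)
  map_add' _ _ := rfl
  map_smul' _ _ := rfl

def toFiber (p : ℝ × ℝ) : (Fin n → F) →ₗ[F] (stairSum F U hU).space p where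
  toFun v i := ⟨(memPattern U p).indicator v i, mem_lineAt_iff.2 <| by
    by_cases hi : p ∈ U i
    · exact Or.inl hi
    · exact Or.inr (Set.indicator_of_notMem (s := memPattern U p) hi v)⟩
  map_add' v w := funext fun i => Subtype.ext (congr_fun (Set.indicator_add' _ v w) i)
  map_smul' c v := funext fun i => Subtype.ext (congr_fun (Set.indicator_const_smul _ c v) i)

theorem fiberVec_injective : Injective (fiberVec p : (stairSum F U hU).space p → Fin n → F) :=
  fun _ _ h => funext fun i => Subtype.ext (congr_fun h i)

theorem fiberVec_map (h : p ≤ q) (x : (stairSum F U hU).space p) :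
    fiberVec q ((stairSum F U hU).map h x) = fiberVec p x := rfl

theorem fiberVec_toFiber (v : Fin n → F) :
    fiberVec p (toFiber (hU := hU) p v) = (memPattern U p).indicator v := rfl

theorem fiberVec_toFiber_of_support_subset {v : Fin n → F} (hv : support v ⊆ memPattern U p) :
    fiberVec p (toFiber (hU := hU) p v) = v :=
  Set.indicator_eq_self.2 hv

theorem fiberVec_apply_of_notMem (x : (stairSum F U hU).space p) {i : Fin n} (hi : p ∉ U i) :
    fiberVec p x i = 0 :=
  (mem_lineAt_iff.1 (x i).2).resolve_left hi

theorem support_fiberVec_subset (x : (stairSum F U hU).space p) :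
    support (fiberVec p x) ⊆ memPattern U p :=
  fun _ hi => by_contra fun h => hi (fiberVec_apply_of_notMem x h)

theorem toFiber_fiberVec (x : (stairSum F U hU).space p) : toFiber p (fiberVec p x) = x :=
  fiberVec_injective (fiberVec_toFiber_of_support_subset (support_fiberVec_subset x))

theorem range_fiberVec :
    Set.range (fiberVec p : (stairSum F U hU).space p → Fin n → F) =
      {v | support v ⊆ memPattern U p} := by
  refine subset_antisymm (Set.range_subset_iff.2 support_fiberVec_subset) fun v hv => ?_
  exact ⟨toFiber p v, fiberVec_toFiber_of_support_subset hv⟩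

end StairSum

open Matrix

noncomputable section MatrixOf

variable {a b : ℕ} {U : Fin a → Set (ℝ × ℝ)} {V : Fin b → Set (ℝ × ℝ)}
  {hU : ∀ i, UpClosed (U i)} {hV : ∀ j, UpClosed (V j)}
  {f : ∀ p, (stairSum F U hU).space p →ₗ[F] (stairSum F V hV).space p}
  {C : Matrix (Fin b) (Fin a) F} {p q : ℝ × ℝ}

abbrev HasMatrix (f : ∀ p, (stairSum F U hU).space p →ₗ[F] (stairSum F V hV).space p)
    (C : Matrix (Fin b) (Fin a) F) : Prop :=
  ∀ p x, fiberVec p (f p x) = C *ᵥ fiberVec p x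

theorem IsHom.fiberVec_apply_toFiber_of_le
    (hf : IsHom (stairSum F U hU) (stairSum F V hV) f) (h : p ≤ q) {v : Fin a → F}
    (hv : support v ⊆ memPattern U p) :
    fiberVec q (f q (toFiber q v)) = fiberVec p (f p (toFiber p v)) := by
  have hmap : (stairSum F U hU).map h (toFiber p v) = toFiber q v := fiberVec_injective <| by
    rw [fiberVec_map, fiberVec_toFiber_of_support_subset hv,
      fiberVec_toFiber_of_support_subset (hv.trans (memPattern_mono hU h))]
  rw [← hmap, ← LinearMap.comp_apply (f q), ← hf h, LinearMap.comp_apply, fiberVec_map]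

theorem IsHom.exists_hasMatrix (hf : IsHom (stairSum F U hU) (stairSum F V hV) f) :
    ∃ C, HasMatrix f C := by
  have hcol : ∀ i, ∃ c : Fin b → F,
      ∀ p ∈ U i, fiberVec p (f p (toFiber p (Pi.single i 1))) = c := by
    intro i
    by_cases hne : (U i).Nonempty
    · obtain ⟨p₀, hp₀⟩ := hne
      -- any two points of an upset lie below their join, which is again in the upset
      refine ⟨fiberVec p₀ (f p₀ (toFiber p₀ (Pi.single i 1))), fun p hp => ?_⟩
      have hsingle : ∀ {r}, r ∈ U i → support (Pi.single i (1 : F)) ⊆ memPattern U r :=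
        fun hr => Pi.support_single_subset.trans (Set.singleton_subset_iff.2 hr)
      rw [← hf.fiberVec_apply_toFiber_of_le le_sup_left (hsingle hp),
        hf.fiberVec_apply_toFiber_of_le le_sup_right (hsingle hp₀)]
    · exact ⟨0, fun p hp => absurd ⟨p, hp⟩ hne⟩
  choose c hc using hcol
  refine ⟨(Matrix.of c)ᵀ, fun p x => ?_⟩
  calc fiberVec p (f p x)
      = fiberVec p (f p (toFiber p (∑ i, fiberVec p x i • Pi.single i 1))) := by
        rw [← pi_eq_sum_univ', toFiber_fiberVec]
    _ = ∑ i, fiberVec p x i • fiberVec p (f p (toFiber p (Pi.single i 1))) := by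
        simp only [map_sum, map_smul]
    _ = ∑ i, fiberVec p x i • c i := by
        refine Finset.sum_congr rfl fun i _ => ?_
        by_cases hi : p ∈ U i
        · rw [hc i p hi]
        · rw [fiberVec_apply_of_notMem x hi, zero_smul, zero_smul]
    _ = (Matrix.of c)ᵀ *ᵥ fiberVec p x := by
        ext j
        simp [Matrix.mulVec, dotProduct, mul_comm]

theorem HasMatrix.isHom (hf : HasMatrix f C) : IsHom (stairSum F U hU) (stairSum F V hV) f :=
  fun p q h => LinearMap.ext fun x => fiberVec_injective <| by
    simp only [LinearMap.comp_apply, fiberVec_map, hf p, hf q]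

theorem HasMatrix.entry_eq_zero (hf : HasMatrix f C) {i : Fin a} {j : Fin b} (hi : p ∈ U i)
    (hj : p ∉ V j) : C j i = 0 := by
  have h := congr_fun (hf p (toFiber p (Pi.single i 1))) j
  rwa [fiberVec_apply_of_notMem _ hj, fiberVec_toFiber_of_support_subset
    (Pi.support_single_subset.trans (Set.singleton_subset_iff.2 hi)), Matrix.mulVec_single_one,
    eq_comm] at h

def matrixHom (C : Matrix (Fin b) (Fin a) F) (p : ℝ × ℝ) :
    (stairSum F U hU).space p →ₗ[F] (stairSum F V hV).space p :=
  toFiber p ∘ₗ C.mulVecLin ∘ₗ fiberVec p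

theorem hasMatrix_matrixHom (hC : ∀ p, ∀ i ∈ memPattern U p, ∀ j ∉ memPattern V p, C j i = 0) :
    HasMatrix (matrixHom (hU := hU) (hV := hV) C) C := by
  intro p x
  refine fiberVec_toFiber_of_support_subset fun j hj => by_contra fun hjp => hj ?_
  simp only [LinearMap.comp_apply, Matrix.mulVecLin_apply, Matrix.mulVec, dotProduct]
  refine Finset.sum_eq_zero fun i _ => ?_
  by_cases hi : p ∈ U i
  · simp [hC p i hi j hjp]
  · simp [fiberVec_apply_of_notMem x hi]

theorem HasMatrix.injective_iff (hf : HasMatrix f C) (p : ℝ × ℝ) :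
    Injective (f p) ↔ Set.InjOn C.mulVec {v | support v ⊆ memPattern U p} := by
  rw [← range_fiberVec (hU := hU), ← (fiberVec_injective (hU := hV)).of_comp_iff,
    show fiberVec p ∘ f p = C.mulVec ∘ fiberVec p from funext (hf p)]
  exact ⟨Injective.injOn_range, fun h x y hxy =>
    fiberVec_injective (h ⟨x, rfl⟩ ⟨y, rfl⟩ hxy)⟩

theorem HasMatrix.trivialCoker_iff (hf : HasMatrix f C) {ε : ℝ} (hε : 0 ≤ ε) :
    TrivialCoker (stairSum F U hU) (stairSum F V hV) ε f ↔
      ∀ p, {w | support w ⊆ memPattern V p} ⊆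
        C.mulVec '' {v | support v ⊆ memPattern U (p + (ε, ε))} := by
  refine forall_congr' fun p => ?_
  rw [← range_fiberVec (hU := hV), ← range_fiberVec (hU := hU), ← Set.range_comp,
    Set.range_subset_iff]
  refine forall_congr' fun y => ?_
  rw [forall_prop_of_true (le_add_of_nonneg_right (show (0 : ℝ × ℝ) ≤ (ε, ε) from ⟨hε, hε⟩))]
  refine exists_congr fun x => ?_
  rw [← fiberVec_injective.eq_iff, hf, fiberVec_map]
  rfl

end MatrixOf

section Characterization

variable {a b : ℕ} {U : Fin a → Set (ℝ × ℝ)} {V : Fin b → Set (ℝ × ℝ)}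
  {hU : ∀ i, UpClosed (U i)} {hV : ∀ j, UpClosed (V j)}

-- `I` and `J` record the summands of the source and the target present at a point `p`,
-- `I'` those of the source present at `p + (ε, ε)`.
def InjCokerCondition (C : Matrix (Fin b) (Fin a) F) (I : Set (Fin a)) (J : Set (Fin b))
    (I' : Set (Fin a)) : Prop :=
  (∀ i ∈ I, ∀ j ∉ J, C j i = 0) ∧ Set.InjOn C.mulVec {v | support v ⊆ I} ∧
    {w | support w ⊆ J} ⊆ C.mulVec '' {v | support v ⊆ I'}

theorem exists_injective_trivialCoker_iff {ε : ℝ} (hε : 0 ≤ ε) :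
    (∃ f, IsHom (stairSum F U hU) (stairSum F V hV) f ∧ (∀ p, Injective (f p)) ∧
        TrivialCoker (stairSum F U hU) (stairSum F V hV) ε f) ↔
      ∃ C : Matrix (Fin b) (Fin a) F, ∀ p,
        InjCokerCondition C (memPattern U p) (memPattern V p) (memPattern U (p + (ε, ε))) := by
  constructor
  · rintro ⟨f, hf, hinj, hcoker⟩
    obtain ⟨C, hC⟩ := hf.exists_hasMatrix
    exact ⟨C, fun p => ⟨fun i hi j hj => hC.entry_eq_zero hi hj, (hC.injective_iff p).1 (hinj p),
      (hC.trivialCoker_iff hε).1 hcoker p⟩⟩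
  · rintro ⟨C, hC⟩
    have hf := hasMatrix_matrixHom (hU := hU) (hV := hV) fun p => (hC p).1
    exact ⟨matrixHom C, hf.isHom, fun p => (hf.injective_iff p).2 (hC p).2.1,
      (hf.trivialCoker_iff hε).2 fun p => (hC p).2.2⟩

end Characterization

theorem stmt_17_general (F : Type) [Field F] (a b : ℕ)
    (S : Fin a → Set (ℝ × ℝ)) (T : Fin b → Set (ℝ × ℝ))
    (hS : ∀ i, IsStaircase (S i)) (hT : ∀ j, IsStaircase (T j))
    (ε : ℝ) (hε : 0 ≤ ε) :
    (∃ f, IsHom (dirSum fun i => stairMod F (S i) (hS i).upClosed)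
            (dirSum fun j => stairMod F (T j) (hT j).upClosed) f ∧
          (∀ p : ℝ × ℝ, Function.Injective (f p)) ∧
          TrivialCoker (dirSum fun i => stairMod F (S i) (hS i).upClosed)
            (dirSum fun j => stairMod F (T j) (hT j).upClosed) ε f) ↔
    (∃ f, IsHom (dirSum fun i => stairMod F (interior (S i)) (upClosed_interior (hS i).upClosed))
            (dirSum fun j => stairMod F (interior (T j)) (upClosed_interior (hT j).upClosed)) f ∧
          (∀ p : ℝ × ℝ, Function.Injective (f p)) ∧
          TrivialCoker (dirSum fun i => stairMod F (interior (S i)) (upClosed_interior (hS i).upClosed))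
            (dirSum fun j => stairMod F (interior (T j)) (upClosed_interior (hT j).upClosed)) ε f) := by
  refine (exists_injective_trivialCoker_iff hε).trans <|
    Iff.trans ?_ (exists_injective_trivialCoker_iff hε).symm
  exact exists_congr fun C => forall_memPattern_iff_interior
    (fun i => (hS i).upClosed) (fun i => (hS i).isClosed)
    (fun j => (hT j).upClosed) (fun j => (hT j).isClosed) (ε, ε) (InjCokerCondition C)

/-- **Passing to interiors.** For finite direct sums `M`, `N` of staircase modules, there
is an injective morphism `M → N` with `ε`-trivial cokernel iff there is an injective
morphism `M° → N°` with `ε`-trivial cokernel, where `°` denotes the modules built from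
the topological interiors of the staircases. -/
theorem stmt_17 (F : Type) [Field F] [Fintype F] (a b : ℕ) (ha : 1 ≤ a) (hb : 1 ≤ b)
    (S : Fin a → Set (ℝ × ℝ)) (T : Fin b → Set (ℝ × ℝ))
    (hS : ∀ i, IsStaircase (S i)) (hT : ∀ j, IsStaircase (T j))
    (ε : ℝ) (hε : 0 ≤ ε) :
    (∃ f, IsHom (dirSum fun i => stairMod F (S i) (hS i).upClosed)
            (dirSum fun j => stairMod F (T j) (hT j).upClosed) f ∧
          (∀ p : ℝ × ℝ, Function.Injective (f p)) ∧
          TrivialCoker (dirSum fun i => stairMod F (S i) (hS i).upClosed)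
            (dirSum fun j => stairMod F (T j) (hT j).upClosed) ε f) ↔
    (∃ f, IsHom (dirSum fun i => stairMod F (interior (S i)) (upClosed_interior (hS i).upClosed))
            (dirSum fun j => stairMod F (interior (T j)) (upClosed_interior (hT j).upClosed)) f ∧
          (∀ p : ℝ × ℝ, Function.Injective (f p)) ∧
          TrivialCoker (dirSum fun i => stairMod F (interior (S i)) (upClosed_interior (hS i).upClosed))
            (dirSum fun j => stairMod F (interior (T j)) (upClosed_interior (hT j).upClosed)) ε f) :=
  stmt_17_general F a b S T hS hT ε hε
end

section
/- Let F be a finite field with q elements and let φ be a 3CNF formula over variables x_1,…,x_n with clauses c_1,…,c_m, where clause c_j involves the three distinct variables x_{α_{j,1}}, x_{α_{j,2}}, x_{α_{j,3}}. For 1 ≤ l ≤ 3, set X_j^l = {1} if the literal of c_j on x_{α_{j,l}} is positive and X_j^l = {2,…,q} if it is negative. Then φ is satisfiable if and only if there exists a function d : [n]×[q] → F such that (i) for every i ∈ [n] the map r ↦ d(i,r) is a bijection from [q] onto F, and (ii) for every j ∈ [m] and every (y,z,w) ∈ X_j^1 × X_j^2 × X_j^3, the three elements d(α_{j,1}, y),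 d(α_{j,2}, z), d(α_{j,3}, w) are not all equal to zero. -/
/-- **Characterization of 3SAT via constrained field assignments.** A 3CNF formula `φ`
(with `n` variables and `m` clauses, clause `j` given by `clauses j : Fin 3 → Fin n × Bool`,
`true` meaning a positive literal) is satisfiable iff there is `d : [n] × [q] → F`
(with `q = |F|`, here `[q]` modeled by `Fin q`) such that each `d i` is a bijection onto `F`
and for each clause `j` and each admissible triple of indices `(y, z, w)` — where the index
set is `{0}` for a positive literal and `{r ≠ 0}` for a negative one — the corresponding
three values of `d` are not all zero. -/
theorem stmt_19 (F : Type) [Field F] [Fintype F] (q : ℕ) (hq : Fintype.card F = q)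
    (n m : ℕ) (clauses : Fin m → Fin 3 → Fin n × Bool)
    (hdist : ∀ j : Fin m, Function.Injective fun l => (clauses j l).1) :
    (∃ τ : Fin n → Bool, ∀ j : Fin m, ∃ l : Fin 3,
        τ (clauses j l).1 = (clauses j l).2) ↔
    (∃ d : Fin n → Fin q → F,
        (∀ i, Function.Bijective (d i)) ∧
        (∀ (j : Fin m) (y z w : Fin q),
          (if (clauses j 0).2 = true then y.val = 0 else y.val ≠ 0) →
          (if (clauses j 1).2 = true then z.val = 0 else z.val ≠ 0) →
          (if (clauses j 2).2 = true then w.val = 0 else w.val ≠ 0) →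
          ¬(d (clauses j 0).1 y = 0 ∧ d (clauses j 1).1 z = 0 ∧
            d (clauses j 2).1 w = 0))) := by
  have hq2 : 1 < q := hq ▸ Fintype.one_lt_card
  have hq0 : 0 < q := by omega
  set z0 : Fin q := ⟨0, hq0⟩ with hz0
  set e : Fin q ≃ F := (Fintype.equivFinOfCardEq hq).symm with he
  constructor
  · rintro ⟨τ, hτ⟩
    set d : Fin n → Fin q → F :=
      fun i r => e (Equiv.swap z0 (e.symm (if τ i then 1 else 0)) r) with hd
    have hval : ∀ i, d i z0 = (if τ i then 1 else 0) := by
      intro i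
      simp [hd, Equiv.swap_apply_left]
    have hbij : ∀ i, Function.Bijective (d i) := by
      intro i
      exact ((Equiv.swap z0 (e.symm (if τ i then 1 else 0))).trans e).bijective
    refine ⟨d, hbij, ?_⟩
    intro j y z w h0 h1 h2 hall
    obtain ⟨hdy, hdz, hdw⟩ := hall
    obtain ⟨l, hl⟩ := hτ j
    have main : ∀ (u : Fin q), ∀ l : Fin 3,
        τ (clauses j l).1 = (clauses j l).2 →
        (if (clauses j l).2 = true then u.val = 0 else u.val ≠ 0) →
        d (clauses j l).1 u ≠ 0 := by
      intro u l hl hu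
      cases hb : (clauses j l).2 with
      | true =>
        rw [hb] at hl hu
        simp at hu
        have : u = z0 := Fin.ext (by simp [hz0, hu])
        rw [this, hval, hl]
        simp
      | false =>
        rw [hb] at hl hu
        simp at hu
        intro hzero
        have h0' : d (clauses j l).1 z0 = 0 := by rw [hval, hl]; simp
        have := (hbij (clauses j l).1).1 (hzero.trans h0'.symm)
        apply hu
        rw [this]
    fin_cases l
    · exact main y 0 hl h0 hdy
    · exact main z 1 hl h1 hdz
    · exact main w 2 hl h2 hdw
  · rintro ⟨d, hbij, hcl⟩
    classical
    refine ⟨fun i => decide (d i z0 ≠ 0), ?_⟩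
    intro j
    by_contra h
    push_neg at h
    have key : ∀ l : Fin 3, ∃ y : Fin q,
        (if (clauses j l).2 = true then y.val = 0 else y.val ≠ 0) ∧
        d (clauses j l).1 y = 0 := by
      intro l
      have hl := h l
      cases hb : (clauses j l).2 with
      | true =>
        rw [hb] at hl
        simp at hl
        exact ⟨z0, by simp [hb, hz0], hl⟩
      | false =>
        rw [hb] at hl
        simp at hl
        obtain ⟨y, hy⟩ := (hbij (clauses j l).1).2 0
        refine ⟨y, ?_, hy⟩
        simp only [hb, if_neg (by simp : ¬(false = true))]
        intro h0
        have : y = z0 := Fin.ext (by simp [hz0, h0])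
        rw [this] at hy
        exact hl hy
    obtain ⟨y, hy1, hy2⟩ := key 0
    obtain ⟨z, hz1, hz2⟩ := key 1
    obtain ⟨w, hw1, hw2⟩ := key 2
    exact hcl j y z w hy1 hz1 hw1 ⟨hy2, hz2, hw2⟩
end
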